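/- arXiv:1903.11540 — 3 statements merged into one kernel-verified Lean document; each statement's English description precedes it below -/
import Mathlib

section
/- Let n, r, s be natural numbers with n = r + s, let P be a real n×r matrix and M a real r×n matrix. Then the coefficient of X^s in the characteristic polynomial of the n×n matrix P·M vanishes if and only if the r×r matrix M·P is not invertible, i.e. det(M·P) = 0. -/
set_option synthInstance.maxHeartbeats 1000000
set_option maxHeartbeats 1000000

open Polynomial Matrix

lemma charpoly_map_det {m : ℕ} (A : Matrix (Fin m) (Fin m) ℝ) :
    (algebraMap ℝ[X] (RatFunc ℝ)) A.charpoly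
      = Matrix.det ((algebraMap ℝ[X] (RatFunc ℝ) X) • (1 : Matrix (Fin m) (Fin m) (RatFunc ℝ))
          - A.map ((algebraMap ℝ[X] (RatFunc ℝ)).comp C)) := by
  set φ : ℝ[X] →+* RatFunc ℝ := algebraMap ℝ[X] (RatFunc ℝ)
  rw [Matrix.charpoly, RingHom.map_det, RingHom.mapMatrix_apply]
  congr 1
  rw [charmatrix]
  ext i j
  simp [Matrix.scalar_apply, Matrix.map_apply, Matrix.sub_apply, Matrix.diagonal_apply,
    Matrix.smul_apply, Matrix.one_apply, apply_ite φ]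


lemma key (n r s : ℕ) (hn : n = r + s)
    (P : Matrix (Fin n) (Fin r) ℝ) (M : Matrix (Fin r) (Fin n) ℝ) :
    (P * M).charpoly = X ^ s * (M * P).charpoly := by
  set K := RatFunc ℝ
  set φ : ℝ[X] →+* K := algebraMap ℝ[X] K
  have hinj : Function.Injective φ := IsFractionRing.injective _ _
  apply hinj
  have hx : (φ X : K) ≠ 0 := (map_ne_zero_iff φ hinj).mpr X_ne_zero
  set x : K := φ X with hxdef
  set c : ℝ →+* K := φ.comp C with hc
  have hmapPM : (P * M).map c = P.map c * M.map c := Matrix.map_mul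
  have hmapMP : (M * P).map c = M.map c * P.map c := Matrix.map_mul
  set P' := P.map c
  set M' := M.map c
  have h1 : ∀ (m : ℕ) (B : Matrix (Fin m) (Fin m) K),
      (x • (1 : Matrix (Fin m) (Fin m) K) - B).det = x ^ m * (1 - x⁻¹ • B).det := by
    intro m B
    have h2 : x • (1 : Matrix (Fin m) (Fin m) K) - B = x • (1 - x⁻¹ • B) := by
      rw [smul_sub, smul_smul, mul_inv_cancel₀ hx, one_smul]
    rw [h2, Matrix.det_smul, Fintype.card_fin]
  rw [_root_.map_mul, map_pow, charpoly_map_det, charpoly_map_det, hmapPM, hmapMP]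
  rw [h1 n, h1 r]
  have h3 : (1 - x⁻¹ • (P' * M')).det = (1 - x⁻¹ • (M' * P')).det := by
    rw [← Matrix.smul_mul, Matrix.det_one_sub_mul_comm, Matrix.mul_smul]
  rw [h3]
  subst hn
  rw [pow_add]
  ring

theorem stmt_9 (n r s : ℕ) (hn : n = r + s)
    (P : Matrix (Fin n) (Fin r) ℝ) (M : Matrix (Fin r) (Fin n) ℝ) :
    (P * M).charpoly.coeff s = 0 ↔ (M * P).det = 0 := by
  rw [key n r s hn P M]
  have h0 : (X ^ s * (M * P).charpoly).coeff s = (M * P).charpoly.coeff 0 := by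
    simpa using Polynomial.coeff_X_pow_mul ((M * P).charpoly) s 0
  rw [h0, Matrix.det_eq_sign_charpoly_coeff (M * P), Fintype.card_fin]
  constructor
  · intro h; rw [h, mul_zero]
  · intro h
    rcases mul_eq_zero.mp h with h' | h'
    · exact absurd h' (by positivity)
    · exact h'
end

section
/- Let n, r, s be natural numbers with n = r + s, let P1 be a real n×r matrix, P2 a real n×s matrix, N1 a real r×n matrix and N2 a real s×n matrix. Set N := the stacked n×n matrix with top block N1 and bottom block N2, and B := N·[P1 | P2], and assume B is invertible. Then for every real ε ≠ 0 the matrix A2(ε) := N·[P1 | ε·P2] is invertible, and I_n − [P1 | ε·P2]·A2(ε)⁻¹·N = I_n − [P1 | P2]·B⁻¹·N; in particular the left-hand side is independent of ε ≠ 0 and extends smoothly to ε = 0. -/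
/-!
Scaling the second column block by `ε` is right multiplication by the invertible block-diagonal
matrix `D = diag(1, ε • 1)`, i.e. `[P1 | ε • P2] = [P1 | P2] * D`. The oblique projection
`C (N C)⁻¹ N` is unchanged when `C` is replaced by `C D` for any invertible `D`, since
`(N C D)⁻¹ = D⁻¹ (N C)⁻¹`.
-/

open Matrix

namespace Matrix

variable {R m k r s : Type*} [CommRing R] [Fintype k] [DecidableEq k]

theorem mul_mul_inv_mul_mul_of_isUnit_right [Fintype m] (C : Matrix m k R) (N : Matrix k m R)
    (D : Matrix k k R) (hD : IsUnit D) : C * D * (N * (C * D))⁻¹ * N = C * (N * C)⁻¹ * N := by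
  rw [← Matrix.mul_assoc N, mul_inv_rev, Matrix.mul_assoc C D, ← Matrix.mul_assoc D,
    mul_nonsing_inv D ((isUnit_iff_isUnit_det D).mp hD), Matrix.one_mul]

variable [Fintype r] [Fintype s] [DecidableEq r] [DecidableEq s]

theorem fromCols_smul_right_eq_mul_fromBlocks (P1 : Matrix m r R) (P2 : Matrix m s R) (c : R) :
    fromCols P1 (c • P2) =
      fromCols P1 P2 * (fromBlocks 1 0 0 (c • 1) : Matrix (r ⊕ s) (r ⊕ s) R) := by
  simp [fromCols_mul_fromBlocks]

theorem isUnit_fromBlocks_one_zero_zero_smul_one {c : R} (hc : IsUnit c) :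
    IsUnit (fromBlocks (1 : Matrix r r R) 0 0 (c • (1 : Matrix s s R))) := by
  rw [isUnit_iff_isUnit_det, det_fromBlocks_zero₂₁, det_smul, det_one, det_one, one_mul, mul_one]
  exact hc.pow _

end Matrix

theorem stmt_11_general (n r s : ℕ)
    (P1 : Matrix (Fin n) (Fin r) ℝ) (P2 : Matrix (Fin n) (Fin s) ℝ)
    (N1 : Matrix (Fin r) (Fin n) ℝ) (N2 : Matrix (Fin s) (Fin n) ℝ)
    (hB : IsUnit (Matrix.fromRows N1 N2 * Matrix.fromCols P1 P2)) :
    ∀ ε : ℝ, ε ≠ 0 →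
      IsUnit (Matrix.fromRows N1 N2 * Matrix.fromCols P1 (ε • P2)) ∧
      (1 : Matrix (Fin n) (Fin n) ℝ) -
          Matrix.fromCols P1 (ε • P2) *
            (Matrix.fromRows N1 N2 * Matrix.fromCols P1 (ε • P2))⁻¹ *
            Matrix.fromRows N1 N2 =
        (1 : Matrix (Fin n) (Fin n) ℝ) -
          Matrix.fromCols P1 P2 *
            (Matrix.fromRows N1 N2 * Matrix.fromCols P1 P2)⁻¹ *
            Matrix.fromRows N1 N2 := by
  intro ε hε
  have hD := isUnit_fromBlocks_one_zero_zero_smul_one (r := Fin r) (s := Fin s) hε.isUnit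
  rw [fromCols_smul_right_eq_mul_fromBlocks]
  refine ⟨?_, by rw [mul_mul_inv_mul_mul_of_isUnit_right _ _ _ hD]⟩
  rw [← Matrix.mul_assoc]
  exact hB.mul hD

theorem stmt_11 (n r s : ℕ) (hn : n = r + s)
    (P1 : Matrix (Fin n) (Fin r) ℝ) (P2 : Matrix (Fin n) (Fin s) ℝ)
    (N1 : Matrix (Fin r) (Fin n) ℝ) (N2 : Matrix (Fin s) (Fin n) ℝ)
    (hB : IsUnit (Matrix.fromRows N1 N2 * Matrix.fromCols P1 P2)) :
    ∀ ε : ℝ, ε ≠ 0 →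
      IsUnit (Matrix.fromRows N1 N2 * Matrix.fromCols P1 (ε • P2)) ∧
      (1 : Matrix (Fin n) (Fin n) ℝ) -
          Matrix.fromCols P1 (ε • P2) *
            (Matrix.fromRows N1 N2 * Matrix.fromCols P1 (ε • P2))⁻¹ *
            Matrix.fromRows N1 N2 =
        (1 : Matrix (Fin n) (Fin n) ℝ) -
          Matrix.fromCols P1 P2 *
            (Matrix.fromRows N1 N2 * Matrix.fromCols P1 P2)⁻¹ *
            Matrix.fromRows N1 N2 :=
  stmt_11_general n r s P1 P2 N1 N2 hB
end

section
/- Consider the competitive inhibition system with e0 = 0: ṡ = (k1·s + k₋₁)·c1 + k1·s·c2, ċ1 = −(k1·s + k₋₁ + k2)·c1 − k1·s·c2, ċ2 = −k3·(i0 − c2)·c1 − (k3·(i0 − c2) + k₋3)·c2, where all parameters k1, k₋₁, k2, k3, k₋3, i0 are strictly positive. Then for all nonnegative real numbers s, c1, c2 with c2 ≤ i0, the right-hand side vanishes (all three components are zero) if and only if c1 = 0 and c2 = 0. -/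
theorem stmt_13 (k1 km1 k2 k3 km3 i0 : ℝ)
    (hk1 : 0 < k1) (hkm1 : 0 < km1) (hk2 : 0 < k2) (hk3 : 0 < k3)
    (hkm3 : 0 < km3) (hi0 : 0 < i0) :
    ∀ s c1 c2 : ℝ, 0 ≤ s → 0 ≤ c1 → 0 ≤ c2 → c2 ≤ i0 →
      (((k1 * s + km1) * c1 + k1 * s * c2 = 0 ∧
        -(k1 * s + km1 + k2) * c1 - k1 * s * c2 = 0 ∧
        -(k3 * (i0 - c2)) * c1 - (k3 * (i0 - c2) + km3) * c2 = 0) ↔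
      (c1 = 0 ∧ c2 = 0)) := by
  intro s c1 c2 hs hc1 hc2 hc2i
  constructor
  · rintro ⟨h1, h2, h3⟩
    have hc1z : c1 = 0 := by
      have hsum : -(k2 * c1) = 0 := by linarith
      have := hk2.ne'
      nlinarith
    subst hc1z
    have hpos : 0 < k3 * (i0 - c2) + km3 := by nlinarith
    have : (k3 * (i0 - c2) + km3) * c2 = 0 := by linarith
    have hc2z : c2 = 0 := by
      rcases mul_eq_zero.mp this with h | h
      · linarith
      · exact h
    exact ⟨rfl, hc2z⟩
  · rintro ⟨h1, h2⟩
    subst h1; subst h2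
    norm_num
end
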